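/- Branching distributivity preserves global traces: let G1 = p→q:{l_i : r→s:{l'_j : G_j}_{j∈J}}_{i∈I} be an outer branching between p and q each of whose branches performs the same inner branching between r and s with continuations G_j depending only on the inner label, and let G2 = r→s:{l'_j : p→q:{l_i : G_j}_{i∈I}}_{j∈J} be the type obtained by exchanging the two branchings; if {p,q} ∩ {r,s} = ∅ then Tr(G1) = Tr(G2). -/

import Mathlib

abbrev Label := ℕ

inductive VTy
  | bool | nat
deriving DecidableEq

inductive Msg
  | val (U : VTy)
  | lab (l : Label)
deriving DecidableEq

structure Pref where
  sender : ℕ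
  receiver : ℕ
  msg : Msg
deriving DecidableEq

def Pref.pid (g : Pref) : Set ℕ := {g.sender, g.receiver}

inductive Global
  | comm (g : Pref) (G : Global)
  | branch (p q : ℕ) (bs : List (Label × Global))
  | var (t : ℕ)
  | mu (t : ℕ) (G : Global)
  | gend

namespace Global

def subst (t : ℕ) (H : Global) : Global → Global
  | comm g G => comm g (subst t H G)
  | branch p q bs => branch p q (bs.attach.map fun ⟨⟨l, G⟩, h⟩ => (l, subst t H G))
  | var s => if s = t then H else var s
  | mu s G => if s = t then mu s G else mu s (subst t H G)
  | gend => gend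
decreasing_by
  all_goals simp_wf
  all_goals try (have := List.sizeOf_lt_of_mem h; simp only [Prod.mk.sizeOf_spec] at this)
  all_goals try simp only [Global.branch.sizeOf_spec, Global.mu.sizeOf_spec, Global.comm.sizeOf_spec] at *
  all_goals omega

end Global

inductive GStep : Global → Pref → Global → Prop
  | inter (g : Pref) (G : Global) :
      GStep (.comm g G) g G
  | selbra {p q : ℕ} {bs : List (Label × Global)} {l : Label} {Gk : Global} :
      (l, Gk) ∈ bs →
      GStep (.branch p q bs) ⟨p, q, .lab l⟩ Gk
  | iperm {G G' : Global} {g g' : Pref} :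
      GStep G g' G' → g.pid ∩ g'.pid = ∅ →
      GStep (.comm g G) g' (.comm g G')
  | sbperm {p q : ℕ} {bs bs' : List (Label × Global)} {g' : Pref} :
      bs.length = bs'.length →
      (∀ bb ∈ bs.zip bs', bb.1.1 = bb.2.1) →
      (∀ bb ∈ bs.zip bs', GStep bb.1.2 g' bb.2.2) →
      g'.pid ∩ ({p, q} : Set ℕ) = ∅ →
      GStep (.branch p q bs) g' (.branch p q bs')
  | recur {t : ℕ} {G G' : Global} {g : Pref} :
      GStep (Global.subst t (.mu t G) G) g G' →
      GStep (.mu t G) g G'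

inductive GSteps : Global → List Pref → Global → Prop
  | refl (G : Global) : GSteps G [] G
  | cons {G G₁ G₂ : Global} {g : Pref} {tr : List Pref} :
      GStep G g G₁ → GSteps G₁ tr G₂ → GSteps G (g :: tr) G₂

def GTraces (G : Global) : Set (List Pref) := {tr | ∃ G', GSteps G tr G'}

/-! ### Local types -/

inductive Local
  | send (q : ℕ) (m : Msg) (T : Local)
  | recv (p : ℕ) (m : Msg) (T : Local)
  | sel (q : ℕ) (bs : List (Label × Local))
  | bra (p : ℕ) (bs : List (Label × Local))
  | var (t : ℕ)
  | mu (t : ℕ) (T : Local)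
  | lend

namespace Local

def subst (t : ℕ) (H : Local) : Local → Local
  | send q m T => send q m (subst t H T)
  | recv p m T => recv p m (subst t H T)
  | sel q bs => sel q (bs.attach.map fun ⟨⟨l, T⟩, h⟩ => (l, subst t H T))
  | bra p bs => bra p (bs.attach.map fun ⟨⟨l, T⟩, h⟩ => (l, subst t H T))
  | var s => if s = t then H else var s
  | mu s T => if s = t then mu s T else mu s (subst t H T)
  | lend => lend
decreasing_by
  all_goals simp_wf
  all_goals try (have := List.sizeOf_lt_of_mem h; simp only [Prod.mk.sizeOf_spec] at this)
  all_goals try simp only [Local.sel.sizeOf_spec, Local.bra.sizeOf_spec, Local.mu.sizeOf_spec] at *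
  all_goals omega

end Local

/-- Local labels `ℓ ::= q!m | p?m`. -/
inductive LLabel
  | send (q : ℕ) (m : Msg)
  | recv (p : ℕ) (m : Msg)
deriving DecidableEq

/-- The labelled transition system over local types. -/
inductive LStep : Local → LLabel → Local → Prop
  | send {q : ℕ} {m : Msg} {T : Local} : LStep (.send q m T) (.send q m) T
  | recv {p : ℕ} {m : Msg} {T : Local} : LStep (.recv p m T) (.recv p m) T
  | sel {q : ℕ} {bs : List (Label × Local)} {l : Label} {T : Local} :
      (l, T) ∈ bs → LStep (.sel q bs) (.send q (.lab l)) T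
  | bra {p : ℕ} {bs : List (Label × Local)} {l : Label} {T : Local} :
      (l, T) ∈ bs → LStep (.bra p bs) (.recv p (.lab l)) T
  | recur {t : ℕ} {T T' : Local} {ℓ : LLabel} :
      LStep (Local.subst t (.mu t T) T) ℓ T' → LStep (.mu t T) ℓ T'

/-- The set of labels occurring in a list of local branches. -/
def labelsOf (bs : List (Label × Local)) : Set Label := {l | ∃ T, (l, T) ∈ bs}

/-! ### Merging of local types -/

mutual
  /-- The (partial, relationally presented) merge operator `T₁ ⊔ T₂ = T₃` on local types:
  homomorphic everywhere except at branchings, which are merged by taking the union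
  of branches, merging continuations of common labels. -/
  inductive Merge : Local → Local → Local → Prop
    | send {q m T₁ T₂ T₃} : Merge T₁ T₂ T₃ → Merge (.send q m T₁) (.send q m T₂) (.send q m T₃)
    | recv {p m T₁ T₂ T₃} : Merge T₁ T₂ T₃ → Merge (.recv p m T₁) (.recv p m T₂) (.recv p m T₃)
    | sel {q bs₁ bs₂ bs₃} : MergeBs bs₁ bs₂ bs₃ → Merge (.sel q bs₁) (.sel q bs₂) (.sel q bs₃)
    | bra {p : ℕ} {bs₁ bs₂ bs₃ : List (Label × Local)} :
        labelsOf bs₃ = labelsOf bs₁ ∪ labelsOf bs₂ →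
        (∀ l T₃, (l, T₃) ∈ bs₃ → MergeBranch bs₁ bs₂ l T₃) →
        Merge (.bra p bs₁) (.bra p bs₂) (.bra p bs₃)
    | var {t} : Merge (.var t) (.var t) (.var t)
    | mu {t T₁ T₂ T₃} : Merge T₁ T₂ T₃ → Merge (.mu t T₁) (.mu t T₂) (.mu t T₃)
    | lend : Merge .lend .lend .lend

  /-- Pointwise merging of selection branches (same labels in the same order). -/
  inductive MergeBs : List (Label × Local) → List (Label × Local) → List (Label × Local) → Prop
    | nil : MergeBs [] [] []
    | cons {l T₁ T₂ T₃ bs₁ bs₂ bs₃} :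
        Merge T₁ T₂ T₃ → MergeBs bs₁ bs₂ bs₃ →
        MergeBs ((l, T₁) :: bs₁) ((l, T₂) :: bs₂) ((l, T₃) :: bs₃)

  /-- How a branch `(l, T₃)` of a merged branching arises from the two merged lists. -/
  inductive MergeBranch : List (Label × Local) → List (Label × Local) → Label → Local → Prop
    | both {bs₁ bs₂ l T₁ T₂ T₃} :
        (l, T₁) ∈ bs₁ → (l, T₂) ∈ bs₂ → Merge T₁ T₂ T₃ → MergeBranch bs₁ bs₂ l T₃
    | left {bs₁ bs₂ l T₃} :
        (l, T₃) ∈ bs₁ → l ∉ labelsOf bs₂ → MergeBranch bs₁ bs₂ l T₃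
    | right {bs₁ bs₂ l T₃} :
        (l, T₃) ∈ bs₂ → l ∉ labelsOf bs₁ → MergeBranch bs₁ bs₂ l T₃
end

/-- Iterated merge `⊔ᵢ Tᵢ` of a (nonempty) family of local types. -/
inductive MergeList : List Local → Local → Prop
  | single {T} : MergeList [T] T
  | cons {T T' T'' : Local} {Ts : List Local} :
      MergeList Ts T' → Merge T T' T'' → MergeList (T :: Ts) T''

/-! ### Projection of global types onto participants -/

/-- `Proj G r T` is the graph of the (partial) projection function `⌊G⌋r = T`. -/
inductive Proj : Global → ℕ → Local → Prop
  | comm_send {g : Pref} {G : Global} {r : ℕ} {T : Local} :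
      r = g.sender → r ≠ g.receiver → Proj G r T →
      Proj (.comm g G) r (.send g.receiver g.msg T)
  | comm_recv {g : Pref} {G : Global} {r : ℕ} {T : Local} :
      r = g.receiver → r ≠ g.sender → Proj G r T →
      Proj (.comm g G) r (.recv g.sender g.msg T)
  | comm_skip {g : Pref} {G : Global} {r : ℕ} {T : Local} :
      r ≠ g.sender → r ≠ g.receiver → Proj G r T →
      Proj (.comm g G) r T
  | branch_sel {p q : ℕ} {bs : List (Label × Global)} {bs' : List (Label × Local)} :
      p ≠ q →
      bs.length = bs'.length →
      (∀ bb ∈ bs.zip bs', bb.1.1 = bb.2.1) →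
      (∀ bb ∈ bs.zip bs', Proj bb.1.2 p bb.2.2) →
      Proj (.branch p q bs) p (.sel q bs')
  | branch_bra {p q : ℕ} {bs : List (Label × Global)} {bs' : List (Label × Local)} :
      p ≠ q →
      bs.length = bs'.length →
      (∀ bb ∈ bs.zip bs', bb.1.1 = bb.2.1) →
      (∀ bb ∈ bs.zip bs', Proj bb.1.2 q bb.2.2) →
      Proj (.branch p q bs) q (.bra p bs')
  | branch_merge {p q r : ℕ} {bs : List (Label × Global)} {Ts : List Local} {T : Local} :
      r ≠ p → r ≠ q →
      bs.length = Ts.length →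
      (∀ bb ∈ bs.zip Ts, Proj bb.1.2 r bb.2) →
      MergeList Ts T →
      Proj (.branch p q bs) r T
  | mu_proj {t : ℕ} {G : Global} {r : ℕ} {T : Local} :
      Proj G r T → T ≠ .var t → Proj (.mu t G) r (.mu t T)
  | mu_end {t : ℕ} {G : Global} {r : ℕ} :
      Proj G r (.var t) → Proj (.mu t G) r .lend
  | var {t r} : Proj (.var t) r (.var t)
  | gend {r} : Proj .gend r .lend

/-! ### Isomorphism of global types -/

/-- `Iso G₁ G₂` (`G₁ ≅ G₂`): the smallest congruence on global types containing
prefix commutativity, branching, and branching distributivity (branch index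
sets are nonempty, as usual for multiparty session types). -/
inductive Iso : Global → Global → Prop
  | refl (G : Global) : Iso G G
  | symm {G G'} : Iso G G' → Iso G' G
  | trans {G G' G''} : Iso G G' → Iso G' G'' → Iso G G''
  | comm_cong {g : Pref} {G G'} : Iso G G' → Iso (.comm g G) (.comm g G')
  | branch_cong {p q : ℕ} {bs bs' : List (Label × Global)} :
      bs.length = bs'.length →
      (∀ bb ∈ bs.zip bs', bb.1.1 = bb.2.1) →
      (∀ bb ∈ bs.zip bs', Iso bb.1.2 bb.2.2) →
      Iso (.branch p q bs) (.branch p q bs')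
  | mu_cong {t : ℕ} {G G'} : Iso G G' → Iso (.mu t G) (.mu t G')
  | swap {g₁ g₂ : Pref} {G : Global} :
      g₁.pid ∩ g₂.pid = ∅ →
      Iso (.comm g₁ (.comm g₂ G)) (.comm g₂ (.comm g₁ G))
  | branching {p q : ℕ} {g : Pref} {bs : List (Label × Global)} :
      bs ≠ [] →
      g.pid ∩ ({p, q} : Set ℕ) = ∅ →
      Iso (.branch p q (bs.map fun b => (b.1, .comm g b.2))) (.comm g (.branch p q bs))
  | distrib {p q r s : ℕ} {lsI : List Label} {bsJ : List (Label × Global)} :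
      lsI ≠ [] → bsJ ≠ [] →
      ({p, q} : Set ℕ) ∩ ({r, s} : Set ℕ) = ∅ →
      Iso (.branch p q (lsI.map fun l => (l, .branch r s bsJ)))
          (.branch r s (bsJ.map fun bj => (bj.1, .branch p q (lsI.map fun l => (l, bj.2)))))

/-! ### Configurations and their synchronous semantics -/

/-- A configuration: a family of local types, one per participant. -/
abbrev Config := ℕ → Local

/-- The synchronous transition `[Synch]` between configurations, labelled by
the communication `p → q : m` (the pair of dual local labels `q!m · p?m`). -/
inductive CStep : Config → Pref → Config → Prop
  | synch {Δ Δ' : Config} {p q : ℕ} {m : Msg} :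
      p ≠ q →
      LStep (Δ p) (.send q m) (Δ' p) →
      LStep (Δ q) (.recv p m) (Δ' q) →
      (∀ r, r ≠ p → r ≠ q → Δ' r = Δ r) →
      CStep Δ ⟨p, q, m⟩ Δ'

/-- Multi-step synchronous execution of a configuration. -/
inductive CSteps : Config → List Pref → Config → Prop
  | refl (Δ : Config) : CSteps Δ [] Δ
  | cons {Δ Δ₁ Δ₂ : Config} {g : Pref} {tr : List Pref} :
      CStep Δ g Δ₁ → CSteps Δ₁ tr Δ₂ → CSteps Δ (g :: tr) Δ₂

/-- The configuration trace set `T_S(Δ)`, identifying the synchronisation label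
`q!m · p?m` with the global label `p → q : m`. -/
def CTraces (Δ : Config) : Set (List Pref) := {tr | ∃ Δ', CSteps Δ tr Δ'}

/-- Configuration traces `σ`: per-participant sequences of local labels. -/
abbrev CTrace := ℕ → List LLabel

/-- The execution relation `Δ ↝^σ_synch Δ'`, accumulating per participant the
local labels of a sequence of `[Synch]` steps. -/
inductive Exec : Config → CTrace → Config → Prop
  | refl (Δ : Config) : Exec Δ (fun _ => []) Δ
  | step {Δ Δ₁ Δ₂ : Config} {σ : CTrace} {g : Pref} :
      Exec Δ σ Δ₁ → CStep Δ₁ g Δ₂ →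
      Exec Δ
        (fun r =>
          if r = g.sender then σ r ++ [.send g.receiver g.msg]
          else if r = g.receiver then σ r ++ [.recv g.sender g.msg]
          else σ r)
        Δ₂

/-- Terminated configurations: no `[Synch]` transition is available. -/
def Terminated (Δ : Config) : Prop := ∀ g Δ', ¬ CStep Δ g Δ'

/-- The denotation of a configuration: its set of terminated traces. -/
def Denot (Δ : Config) : Set CTrace := {σ | ∃ Δ', Exec Δ σ Δ' ∧ Terminated Δ'}

/-! A trace of `p→q:{lᵢ : Gᵢ}` is cut at its first event involving `p` or `q`: the part before
that event is a trace of every branch, and the event is a selection `p→q:l` whose erasure leaves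
a trace of the branch `l`. When all branches share one continuation `H`, this says that the first
`p`/`q` event is an admissible selection and that erasing it leaves a trace of `H`. Both sides of
the distributivity law then impose the same conditions on a trace: erasing the first `p`/`q`
event and erasing the first `r`/`s` event commute, and cutting before the first `r`/`s` event
commutes with the first erasure, as long as neither event involves both pairs, which
`{p,q} ∩ {r,s} = ∅` guarantees for selections. -/

namespace List

section Erase

variable {α : Type*} {p q : α → Bool} {l : List α}

theorem find?_eraseP_of_find? (h : ∀ x ∈ l.find? p, q x = false) :
    (l.eraseP p).find? q = l.find? q := by
  induction l with
  | nil => rfl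
  | cons a l ih =>
    by_cases hp : p a
    · simp_all
    · by_cases hq : q a <;> simp_all

theorem takeWhile_eraseP_of_find? (h : ∀ x ∈ l.find? p, q x = false) :
    (l.eraseP p).takeWhile (fun a => !q a) = (l.takeWhile (fun a => !q a)).eraseP p := by
  induction l with
  | nil => rfl
  | cons a l ih =>
    by_cases hp : p a
    · simp_all
    · by_cases hq : q a <;> simp_all

theorem eraseP_comm_of_find? (hp : ∀ x ∈ l.find? p, q x = false)
    (hq : ∀ x ∈ l.find? q, p x = false) :
    (l.eraseP p).eraseP q = (l.eraseP q).eraseP p := by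
  induction l with
  | nil => rfl
  | cons a l ih =>
    by_cases ha : p a
    · simp_all
    · by_cases hb : q a <;> simp_all

theorem takeWhile_not_prefix_eraseP : l.takeWhile (fun a => !p a) <+: l.eraseP p := by
  induction l with
  | nil => exact nil_prefix
  | cons a l ih =>
    by_cases ha : p a
    · simp [ha]
    · simpa [ha] using ih

theorem takeWhile_not_of_find?_eq_none (h : l.find? p = none) :
    l.takeWhile (fun a => !p a) = l :=
  takeWhile_eq_self_iff.2 fun a ha => by simpa using find?_eq_none.1 h a ha

end Erase

section Forall₂

variable {α β : Type*} {R : α → β → Prop}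

theorem exists_forall₂_of_forall_exists :
    ∀ {l : List α}, (∀ a ∈ l, ∃ b, R a b) → ∃ l', Forall₂ R l l'
  | [], _ => ⟨[], .nil⟩
  | a :: l, h => by
    obtain ⟨b, hb⟩ := h a mem_cons_self
    obtain ⟨l', hl'⟩ := exists_forall₂_of_forall_exists fun a ha => h a (mem_cons_of_mem _ ha)
    exact ⟨b :: l', .cons hb hl'⟩

theorem Forall₂.exists_mem_right {l₁ : List α} {l₂ : List β} (h : Forall₂ R l₁ l₂) {a : α}
    (ha : a ∈ l₁) : ∃ b ∈ l₂, R a b := by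
  induction h with
  | nil => cases ha
  | cons hab _ ih =>
    rcases mem_cons.1 ha with rfl | ha
    · exact ⟨_, mem_cons_self, hab⟩
    · obtain ⟨b, hb, hR⟩ := ih ha
      exact ⟨b, mem_cons_of_mem _ hb, hR⟩

theorem Forall₂.exists_mem_left {l₁ : List α} {l₂ : List β} (h : Forall₂ R l₁ l₂) {b : β}
    (hb : b ∈ l₂) : ∃ a ∈ l₁, R a b := by
  induction h with
  | nil => cases hb
  | cons hab _ ih =>
    rcases mem_cons.1 hb with rfl | hb
    · exact ⟨_, mem_cons_self, hab⟩
    · obtain ⟨a, ha, hR⟩ := ih hb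
      exact ⟨a, mem_cons_of_mem _ ha, hR⟩

end Forall₂

end List

def Pref.involves (p q : ℕ) (g : Pref) : Bool :=
  g.sender = p || g.sender = q || g.receiver = p || g.receiver = q

theorem Pref.involves_eq_false_iff {p q : ℕ} {g : Pref} :
    g.involves p q = false ↔ g.pid ∩ {p, q} = ∅ := by
  simp only [involves, Bool.or_eq_false_iff, decide_eq_false_iff_not, pid,
    Set.eq_empty_iff_forall_notMem, Set.mem_inter_iff, Set.mem_insert_iff,
    Set.mem_singleton_iff, not_and, not_or, forall_eq_or_imp, forall_eq]
  aesop

theorem nil_mem_GTraces (G : Global) : [] ∈ GTraces G := ⟨G, .refl G⟩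

theorem cons_mem_GTraces_iff {G : Global} {g : Pref} {tr : List Pref} :
    g :: tr ∈ GTraces G ↔ ∃ G', GStep G g G' ∧ tr ∈ GTraces G' := by
  constructor
  · rintro ⟨_, h⟩
    cases h with
    | cons hg htr => exact ⟨_, hg, _, htr⟩
  · rintro ⟨_, hg, _, htr⟩
    exact ⟨_, .cons hg htr⟩

theorem mem_GTraces_of_prefix {G : Global} {u v : List Pref} (huv : u <+: v)
    (hv : v ∈ GTraces G) : u ∈ GTraces G := by
  obtain ⟨t, rfl⟩ := huv
  obtain ⟨_, h⟩ := hv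
  induction u generalizing G with
  | nil => exact nil_mem_GTraces G
  | cons g u ih =>
    cases h with
    | cons hg h => exact cons_mem_GTraces_iff.2 ⟨_, hg, ih h⟩

theorem GStep.branch_of_forall₂ {p q : ℕ} {bs bs' : List (Label × Global)} {g : Pref}
    (h : List.Forall₂ (fun b b' => b.1 = b'.1 ∧ GStep b.2 g b'.2) bs bs')
    (hg : g.pid ∩ {p, q} = ∅) : GStep (.branch p q bs) g (.branch p q bs') :=
  have ⟨hlen, hzip⟩ := List.forall₂_iff_zip.1 h
  .sbperm hlen (fun _ hb => (hzip hb).1) (fun _ hb => (hzip hb).2) hg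

theorem mem_GTraces_branch_mp {p q : ℕ} {cs : List (Label × Global)} {tr : List Pref}
    (h : tr ∈ GTraces (.branch p q cs)) :
    (∀ b ∈ cs, tr.takeWhile (fun g => !g.involves p q) ∈ GTraces b.2) ∧
      ∀ x ∈ tr.find? (Pref.involves p q), ∃ b ∈ cs,
        x = ⟨p, q, .lab b.1⟩ ∧ tr.eraseP (Pref.involves p q) ∈ GTraces b.2 := by
  induction tr generalizing cs with
  | nil => exact ⟨fun b _ => nil_mem_GTraces b.2, by simp⟩
  | cons g tr ih =>
    obtain ⟨G', hstep, htr⟩ := cons_mem_GTraces_iff.1 h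
    cases hstep with
    | @selbra _ _ _ l _ hmem =>
      have hg : (⟨p, q, .lab l⟩ : Pref).involves p q := by simp [Pref.involves]
      rw [List.takeWhile_cons_of_neg (by simpa using hg), List.find?_cons_of_pos hg,
        List.eraseP_cons_of_pos hg]
      exact ⟨fun b _ => nil_mem_GTraces b.2,
        fun x hx => ⟨_, hmem, (Option.mem_some_iff.1 hx).symm, htr⟩⟩
    | sbperm hlen hlab hsteps hg =>
      have hsucc : List.Forall₂
          (fun (b b' : Label × Global) => b.1 = b'.1 ∧ GStep b.2 g b'.2) cs _ :=
        List.forall₂_iff_zip.2 ⟨hlen, fun hb => ⟨hlab _ hb, hsteps _ hb⟩⟩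
      have hg : g.involves p q = false := Pref.involves_eq_false_iff.2 hg
      obtain ⟨hpre, hcont⟩ := ih htr
      simp only [hg, List.takeWhile_cons_of_pos, Bool.not_false, List.find?_cons_of_neg,
        List.eraseP_cons_of_neg, Bool.false_eq_true, not_false_eq_true]
      refine ⟨fun b hb => ?_, fun x hx => ?_⟩
      · obtain ⟨b', hb', -, hstep⟩ := hsucc.exists_mem_right hb
        exact cons_mem_GTraces_iff.2 ⟨_, hstep, hpre b' hb'⟩
      · obtain ⟨b', hb', rfl, hb'tr⟩ := hcont x hx
        obtain ⟨b, hb, hlab, hstep⟩ := hsucc.exists_mem_left hb'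
        exact ⟨b, hb, by rw [hlab], cons_mem_GTraces_iff.2 ⟨_, hstep, hb'tr⟩⟩
theorem exists_forall₂_GStep_of_cons_mem {g : Pref} {u w : List Pref} (huw : u <+: w)
    {cs : List (Label × Global)} (hcs : ∀ b ∈ cs, g :: u ∈ GTraces b.2) :
    ∃ cs' : List (Label × Global), List.Forall₂ (fun b b' => b.1 = b'.1 ∧ GStep b.2 g b'.2 ∧
      u ∈ GTraces b'.2 ∧ (g :: w ∈ GTraces b.2 → w ∈ GTraces b'.2)) cs cs' := by
  refine List.exists_forall₂_of_forall_exists fun b hb => ?_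
  by_cases hw : g :: w ∈ GTraces b.2
  · obtain ⟨G', hstep, htr⟩ := cons_mem_GTraces_iff.1 hw
    exact ⟨(b.1, G'), rfl, hstep, mem_GTraces_of_prefix huw htr, fun _ => htr⟩
  · obtain ⟨G', hstep, htr⟩ := cons_mem_GTraces_iff.1 (hcs b hb)
    exact ⟨(b.1, G'), rfl, hstep, htr, fun h => absurd h hw⟩

theorem mem_GTraces_branch_mpr {p q : ℕ} {cs : List (Label × Global)} {tr : List Pref}
    (hpre : ∀ b ∈ cs, tr.takeWhile (fun g => !g.involves p q) ∈ GTraces b.2)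
    (hcont : ∀ x ∈ tr.find? (Pref.involves p q), ∃ b ∈ cs,
        x = ⟨p, q, .lab b.1⟩ ∧ tr.eraseP (Pref.involves p q) ∈ GTraces b.2) :
    tr ∈ GTraces (.branch p q cs) := by
  induction tr generalizing cs with
  | nil => exact nil_mem_GTraces _
  | cons g tr ih =>
    by_cases hg : g.involves p q
    · obtain ⟨b, hb, rfl, htr⟩ := hcont g (List.find?_cons_of_pos hg)
      rw [List.eraseP_cons_of_pos hg] at htr
      exact cons_mem_GTraces_iff.2 ⟨_, .selbra hb, htr⟩
    · simp only [hg, List.takeWhile_cons_of_pos, Bool.not_false, List.find?_cons_of_neg,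
        List.eraseP_cons_of_neg, Bool.false_eq_true, not_false_eq_true] at hpre hcont
      obtain ⟨cs', hsucc⟩ :=
        exists_forall₂_GStep_of_cons_mem List.takeWhile_not_prefix_eraseP hpre
      refine cons_mem_GTraces_iff.2 ⟨_, GStep.branch_of_forall₂
        (hsucc.imp fun _ _ h => ⟨h.1, h.2.1⟩) (Pref.involves_eq_false_iff.1 (by simpa using hg)),
        ih (fun b' hb' => ?_) fun x hx => ?_⟩
      · obtain ⟨b, -, -, -, htr, -⟩ := hsucc.exists_mem_left hb'
        exact htr
      · obtain ⟨b, hb, rfl, htr⟩ := hcont x hx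
        obtain ⟨b', hb', hlab, -, -, hb'tr⟩ := hsucc.exists_mem_right hb
        exact ⟨b', hb', by rw [hlab], hb'tr htr⟩

theorem mem_GTraces_branch_iff {p q : ℕ} {cs : List (Label × Global)} {tr : List Pref} :
    tr ∈ GTraces (.branch p q cs) ↔
      (∀ b ∈ cs, tr.takeWhile (fun g => !g.involves p q) ∈ GTraces b.2) ∧
        ∀ x ∈ tr.find? (Pref.involves p q), ∃ b ∈ cs,
          x = ⟨p, q, .lab b.1⟩ ∧ tr.eraseP (Pref.involves p q) ∈ GTraces b.2 :=
  ⟨mem_GTraces_branch_mp, fun h => mem_GTraces_branch_mpr h.1 h.2⟩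

def FirstEventSelects (p q : ℕ) (ls : List Label) (tr : List Pref) : Prop :=
  ∀ x ∈ tr.find? (Pref.involves p q), ∃ l ∈ ls, x = ⟨p, q, .lab l⟩

theorem FirstEventSelects.of_prefix {p q : ℕ} {ls : List Label} {u v : List Pref}
    (h : FirstEventSelects p q ls v) (huv : u <+: v) : FirstEventSelects p q ls u :=
  fun x hx => h x (huv.find?_eq_some hx)

theorem forall_mem_find?_involves_eq_false {p q r s : ℕ} {m : Msg} {tr : List Pref}
    (hx : ⟨p, q, m⟩ ∈ tr.find? (Pref.involves p q)) (hdisj : ({p, q} : Set ℕ) ∩ {r, s} = ∅) :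
    ∀ y ∈ tr.find? (Pref.involves p q), y.involves r s = false :=
  fun _ hy => Option.mem_unique hx hy ▸ Pref.involves_eq_false_iff.2 hdisj

theorem FirstEventSelects.involves_eq_false {p q r s : ℕ} {ls : List Label} {tr : List Pref}
    (h : FirstEventSelects p q ls tr) (hdisj : ({p, q} : Set ℕ) ∩ {r, s} = ∅) :
    ∀ x ∈ tr.find? (Pref.involves p q), x.involves r s = false := fun x hx => by
  obtain ⟨l, -, rfl⟩ := h x hx
  exact forall_mem_find?_involves_eq_false hx hdisj _ hx

theorem firstEventSelects_eraseP_iff {p q r s : ℕ} {ls : List Label} {tr : List Pref}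
    (h : ∀ x ∈ tr.find? (Pref.involves r s), x.involves p q = false) :
    FirstEventSelects p q ls (tr.eraseP (Pref.involves r s)) ↔ FirstEventSelects p q ls tr := by
  rw [FirstEventSelects, FirstEventSelects, List.find?_eraseP_of_find? h]

theorem mem_GTraces_branch_const_iff {p q : ℕ} {ls : List Label} {H : Global}
    {tr : List Pref} (hls : ls ≠ []) :
    tr ∈ GTraces (.branch p q (ls.map fun l => (l, H))) ↔
      FirstEventSelects p q ls tr ∧ tr.eraseP (Pref.involves p q) ∈ GTraces H := by
  rw [mem_GTraces_branch_iff, List.forall_mem_map]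
  simp only [List.mem_map, exists_exists_and_eq_and]
  constructor
  · rintro ⟨hpre, hcont⟩
    refine ⟨fun x hx => (hcont x hx).imp fun _ h => ⟨h.1, h.2.1⟩, ?_⟩
    cases hfind : tr.find? (Pref.involves p q) with
    | none =>
      obtain ⟨l, hl⟩ := List.exists_mem_of_ne_nil ls hls
      rw [List.eraseP_of_forall_not (List.find?_eq_none.1 hfind)]
      simpa only [List.takeWhile_not_of_find?_eq_none hfind] using hpre l hl
    | some x => exact (hcont x hfind).choose_spec.2.2
  · rintro ⟨hfirst, herase⟩
    refine ⟨fun _ _ => mem_GTraces_of_prefix List.takeWhile_not_prefix_eraseP herase,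
      fun x hx => ?_⟩
    obtain ⟨l, hl, rfl⟩ := hfirst x hx
    exact ⟨l, hl, rfl, herase⟩

theorem eraseP_mem_GTraces_branch_iff {p q r s : ℕ} {cs : List (Label × Global)}
    {tr : List Pref} (hP : ∀ x ∈ tr.find? (Pref.involves p q), x.involves r s = false)
    (hdisj : ({r, s} : Set ℕ) ∩ {p, q} = ∅) :
    tr.eraseP (Pref.involves p q) ∈ GTraces (.branch r s cs) ↔
      (∀ b ∈ cs,
          (tr.takeWhile fun g => !g.involves r s).eraseP (Pref.involves p q) ∈ GTraces b.2) ∧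
        ∀ x ∈ tr.find? (Pref.involves r s), ∃ b ∈ cs, x = ⟨r, s, .lab b.1⟩ ∧
          (tr.eraseP (Pref.involves r s)).eraseP (Pref.involves p q) ∈ GTraces b.2 := by
  rw [mem_GTraces_branch_iff, List.takeWhile_eraseP_of_find? hP, List.find?_eraseP_of_find? hP]
  refine and_congr_right fun _ => forall₂_congr fun x hx => exists_congr fun b =>
    and_congr_right fun _ => and_congr_right fun hxb => ?_
  subst hxb
  rw [List.eraseP_comm_of_find? hP (forall_mem_find?_involves_eq_false hx hdisj)]

/-- Branching distributivity preserves global traces: with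
`G₁ = p→q:{l_i : r→s:{l'_j : G_j}_{j∈J}}_{i∈I}` and
`G₂ = r→s:{l'_j : p→q:{l_i : G_j}_{i∈I}}_{j∈J}` (`I`, `J` nonempty),
if `{p,q} ∩ {r,s} = ∅` then `Tr(G₁) = Tr(G₂)`. -/
theorem branching_distributivity_preserves_traces
    (p q r s : ℕ) (lsI : List Label) (bsJ : List (Label × Global))
    (hI : lsI ≠ []) (hJ : bsJ ≠ [])
    (hdisj : ({p, q} : Set ℕ) ∩ ({r, s} : Set ℕ) = ∅) :
    GTraces (.branch p q (lsI.map fun l => (l, .branch r s bsJ)))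
      = GTraces (.branch r s (bsJ.map fun bj =>
          (bj.1, .branch p q (lsI.map fun l => (l, bj.2))))) := by
  have hdisj' : ({r, s} : Set ℕ) ∩ {p, q} = ∅ := by rwa [Set.inter_comm]
  ext tr
  rw [mem_GTraces_branch_const_iff hI, mem_GTraces_branch_iff (tr := tr), List.forall_mem_map]
  simp only [List.mem_map, exists_exists_and_eq_and, mem_GTraces_branch_const_iff hI]
  constructor
  · rintro ⟨hsel, htr⟩
    obtain ⟨hpre, hcont⟩ :=
      (eraseP_mem_GTraces_branch_iff (hsel.involves_eq_false hdisj) hdisj').1 htr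
    refine ⟨fun b hb => ⟨hsel.of_prefix (List.takeWhile_prefix _), hpre b hb⟩, fun x hx => ?_⟩
    obtain ⟨b, hb, rfl, hb'⟩ := hcont x hx
    exact ⟨b, hb, rfl,
      (firstEventSelects_eraseP_iff (forall_mem_find?_involves_eq_false hx hdisj')).2 hsel, hb'⟩
  · rintro ⟨hpre, hcont⟩
    have hsel : FirstEventSelects p q lsI tr := by
      cases hfind : tr.find? (Pref.involves r s) with
      | none =>
        obtain ⟨b, hb⟩ := List.exists_mem_of_ne_nil bsJ hJ
        simpa only [List.takeWhile_not_of_find?_eq_none hfind] using (hpre b hb).1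
      | some x =>
        obtain ⟨b, -, rfl, hsel, -⟩ := hcont x hfind
        exact (firstEventSelects_eraseP_iff (forall_mem_find?_involves_eq_false hfind hdisj')).1 hsel
    refine ⟨hsel, (eraseP_mem_GTraces_branch_iff (hsel.involves_eq_false hdisj) hdisj').2
      ⟨fun b hb => (hpre b hb).2, fun x hx => ?_⟩⟩
    obtain ⟨b, hb, hxb, -, hb'⟩ := hcont x hx
    exact ⟨b, hb, hxb, hb'⟩
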